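/- arXiv:2309.06665 — 9 statements merged into one kernel-verified Lean document; each statement's English description precedes it below -/
import Mathlib

section
/- Let C : ℝ → ℂ be a trigonometric polynomial of the form C(θ) = ∑_{k=-2}^{2} β_k · exp(i·k·θ) for some coefficients β_{-2}, β_{-1}, β_0, β_1, β_2 ∈ ℂ. Then for every θ ∈ ℝ, the derivative of C satisfies the four-term parameter shift rule C'(θ) = [C(θ + π/4) − C(θ − π/4)] − ((√2 − 1)/2)·[C(θ + π/2) − C(θ − π/2)]. -/
open Complex Real

/-!
Each character `θ ↦ exp (i k θ)` is an eigenfunction both of `d/dθ`, with eigenvalue `i k`, and of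
the symmetric difference `C ↦ C (θ + a) - C (θ - a)`, with eigenvalue `2 i sin (k a)`. A combination
of symmetric differences therefore reproduces `C'` on the frequencies `k ∈ {-2, …, 2}` as soon as
`k = 2 sin (k π / 4) - (√2 - 1) sin (k π / 2)` there; both sides are odd in `k`, and at `k = 1, 2`
this is `1 = √2 - (√2 - 1)` and `2 = 2`.
-/

theorem exp_I_mul_add_sub_exp_I_mul_sub (ω : ℂ) (θ a : ℝ) :
    exp (I * ω * ↑(θ + a)) - exp (I * ω * ↑(θ - a)) =
      2 * I * Complex.sin (ω * a) * exp (I * ω * θ) := by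
  have two_I_mul_sin : 2 * I * Complex.sin (ω * a) = exp (ω * a * I) - exp (-(ω * a) * I) := by
    rw [mul_right_comm, two_sin, mul_assoc, I_mul_I]
    ring
  rw [two_I_mul_sin, sub_mul, ← Complex.exp_add, ← Complex.exp_add]
  push_cast
  ring_nf

theorem hasDerivAt_sum_exp_I_mul (s : Finset ℤ) (β : ℤ → ℂ) (θ : ℝ) :
    HasDerivAt (fun θ : ℝ => ∑ k ∈ s, β k * exp (I * k * θ))
      (∑ k ∈ s, β k * (I * k) * exp (I * k * θ)) θ := by
  refine HasDerivAt.fun_sum fun k _ => ?_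
  have h : HasDerivAt (fun z : ℂ => exp (I * k * z)) (exp (I * k * θ) * (I * k)) θ := by
    simpa using ((hasDerivAt_id (θ : ℂ)).const_mul (I * k)).cexp
  simpa [mul_assoc, mul_comm, mul_left_comm] using h.comp_ofReal.const_mul (β k)

theorem sum_exp_I_mul_add_sub (s : Finset ℤ) (β : ℤ → ℂ) (θ a : ℝ) :
    ∑ k ∈ s, β k * exp (I * k * ↑(θ + a)) - ∑ k ∈ s, β k * exp (I * k * ↑(θ - a)) =
      ∑ k ∈ s, β k * (2 * I * Real.sin (k * a)) * exp (I * k * θ) := by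
  rw [← Finset.sum_sub_distrib]
  refine Finset.sum_congr rfl fun k _ => ?_
  rw [← mul_sub, exp_I_mul_add_sub_exp_I_mul_sub]
  push_cast
  ring

theorem deriv_eq_shift_combination (s : Finset ℤ) (β : ℤ → ℂ) (a b c : ℝ)
    (hfreq : ∀ k ∈ s, (k : ℝ) = 2 * Real.sin (k * a) - 2 * c * Real.sin (k * b)) (θ : ℝ) :
    deriv (fun θ : ℝ => ∑ k ∈ s, β k * exp (I * k * θ)) θ =
      (∑ k ∈ s, β k * exp (I * k * ↑(θ + a)) - ∑ k ∈ s, β k * exp (I * k * ↑(θ - a)))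
        - c * (∑ k ∈ s, β k * exp (I * k * ↑(θ + b)) - ∑ k ∈ s, β k * exp (I * k * ↑(θ - b))) := by
  rw [(hasDerivAt_sum_exp_I_mul s β θ).deriv, sum_exp_I_mul_add_sub, sum_exp_I_mul_add_sub,
    Finset.mul_sum, ← Finset.sum_sub_distrib]
  refine Finset.sum_congr rfl fun k hk => ?_
  have h : (k : ℂ) = 2 * Real.sin (k * a) - 2 * c * Real.sin (k * b) := by exact_mod_cast hfreq k hk
  rw [h]
  ring

theorem intCast_eq_two_mul_sin_pi_div_four_sub (k : ℤ) (hk : k ∈ Finset.Icc (-2 : ℤ) 2) :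
    (k : ℝ) = 2 * Real.sin (k * (π / 4)) - 2 * ((√2 - 1) / 2) * Real.sin (k * (π / 2)) := by
  have h2 : √2 * √2 = 2 := Real.mul_self_sqrt zero_le_two
  rw [Finset.mem_Icc] at hk
  obtain ⟨hlo, hhi⟩ := hk
  interval_cases k <;> norm_num [neg_mul, Real.sin_neg, show 2 * (π / 4) = π / 2 by ring,
    show 2 * (π / 2) = π by ring] <;> nlinarith

/-- **Four-term parameter shift rule** for a trigonometric polynomial
`C(θ) = ∑_{k=-2}^{2} β_k · exp(i k θ)`. -/
theorem four_term_parameter_shift_rule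
    (β : ℤ → ℂ) (C : ℝ → ℂ)
    (hC : ∀ θ : ℝ, C θ = ∑ k ∈ Finset.Icc (-2 : ℤ) 2,
        β k * Complex.exp (Complex.I * (k : ℂ) * (θ : ℂ))) :
    ∀ θ : ℝ, deriv C θ =
      (C (θ + π / 4) - C (θ - π / 4))
        - ((Real.sqrt 2 - 1) / 2 : ℝ) * (C (θ + π / 2) - C (θ - π / 2)) := by
  intro θ
  rw [funext hC]
  exact deriv_eq_shift_combination _ β _ _ _ intCast_eq_two_mul_sin_pi_div_four_sub θ
end

section
/- Let l ≥ 1 and let C : ℝ^l → ℂ be of the form C(θ) = ∑_{k=1}^{L} β_k · exp(i·⟨γ_k, θ⟩), where each β_k ∈ ℂ and each frequency vector γ_k lies in {−2,−1,0,1,2}^l. Then for every coordinate j ∈ {1,…,l} and every θ ∈ ℝ^l, the partial derivative satisfies ∂C/∂θ_j (θ) = [C(θ + (π/4)e_j) − C(θ − (π/4)e_j)] − ((√2 − 1)/2)·[C(θ + (π/2)e_j) − C(θ − (π/2)e_j)], where e_j is the j-th standard unit vector of ℝ^l. -/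
/-!
Everything is linear in the plane waves `θ ↦ exp(i⟨γ, θ⟩)`. Along the `j`-th coordinate such a
wave has derivative `i γ_j` times itself, while the symmetric shift difference by `±s` is
`2i sin(γ_j s)` times itself. The rule therefore reduces to the scalar identity
`a = 2 sin(aπ/4) - (√2 - 1) sin(aπ/2)`, which holds for `a = 0, 1, 2` and, both sides being odd,
for `a ∈ {-2, …, 2}`.
-/

open Complex Real

lemma shift_coefficient_identity {a : ℝ} (ha : a ∈ ({-2, -1, 0, 1, 2} : Set ℝ)) :
    a = 2 * Real.sin (a * (π / 4)) - (√2 - 1) * Real.sin (a * (π / 2)) := by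
  rcases ha with rfl | rfl | rfl | rfl | rfl <;>
    norm_num [neg_mul, Real.sin_neg, show (2 : ℝ) * (π / 4) = π / 2 by ring,
      show (2 : ℝ) * (π / 2) = π by ring] <;> ring

lemma exp_I_mul_sub_exp_neg_I_mul (x : ℝ) :
    exp (I * x) - exp (-(I * x)) = 2 * I * Real.sin x := by
  rw [← two_sinh, mul_comm I, sinh_mul_I, ofReal_sin]; ring

lemma Function.update_eq_add_single {ι : Type*} [DecidableEq ι] (θ : ι → ℝ) (j : ι) (t : ℝ) :
    Function.update θ j t = θ + Pi.single j (t - θ j) := by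
  ext i; rcases eq_or_ne i j with rfl | h <;> simp [*]

section PlaneWave

variable {ι : Type*} [Fintype ι]

noncomputable def planeWave (γ θ : ι → ℝ) : ℂ := exp (I * (γ ⬝ᵥ θ : ℝ))

variable [DecidableEq ι]

lemma planeWave_add_single_sub_planeWave_sub_single (γ θ : ι → ℝ) (j : ι) (s : ℝ) :
    planeWave γ (θ + Pi.single j s) - planeWave γ (θ - Pi.single j s) =
      2 * I * Real.sin (γ j * s) * planeWave γ θ := by
  simp only [planeWave, dotProduct_add, dotProduct_sub, dotProduct_single]
  rw [← exp_I_mul_sub_exp_neg_I_mul, sub_mul, ← Complex.exp_add, ← Complex.exp_add]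
  push_cast; ring_nf

lemma hasDerivAt_planeWave_update (γ θ : ι → ℝ) (j : ι) :
    HasDerivAt (fun t => planeWave γ (Function.update θ j t)) (I * γ j * planeWave γ θ) (θ j) := by
  have hphase : HasDerivAt (fun t => γ ⬝ᵥ θ + γ j * (t - θ j)) (γ j) (θ j) := by
    simpa using (((hasDerivAt_id _).sub_const (θ j)).const_mul (γ j)).const_add (γ ⬝ᵥ θ)
  have := ((hphase.ofReal_comp).const_mul I).cexp
  simp only [sub_self, mul_zero, add_zero] at this
  convert this using 1
  · ext t; simp [planeWave, Function.update_eq_add_single, dotProduct_add, dotProduct_single]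
  · simp only [planeWave]; ring

lemma planeWave_shift_rule (γ θ : ι → ℝ) (j : ι) (hγ : γ j ∈ ({-2, -1, 0, 1, 2} : Set ℝ)) :
    I * γ j * planeWave γ θ =
      (planeWave γ (θ + Pi.single j (π / 4)) - planeWave γ (θ - Pi.single j (π / 4)))
        - ((√2 - 1) / 2 : ℝ) *
            (planeWave γ (θ + Pi.single j (π / 2)) - planeWave γ (θ - Pi.single j (π / 2))) := by
  rw [planeWave_add_single_sub_planeWave_sub_single, planeWave_add_single_sub_planeWave_sub_single]
  conv_lhs => rw [shift_coefficient_identity hγ]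
  push_cast; ring

end PlaneWave

theorem multivariate_parameter_shift_rule_general
    (l L : ℕ)
    (β : Fin L → ℂ) (γ : Fin L → Fin l → ℝ)
    (hγ : ∀ k j, γ k j ∈ ({-2, -1, 0, 1, 2} : Set ℝ))
    (C : (Fin l → ℝ) → ℂ)
    (hC : ∀ θ : Fin l → ℝ, C θ = ∑ k, β k * Complex.exp (Complex.I * ((∑ j, γ k j * θ j : ℝ) : ℂ)))
    (j : Fin l) (θ : Fin l → ℝ) :
    deriv (fun t : ℝ => C (Function.update θ j t)) (θ j) =
      (C (θ + Pi.single j (π / 4)) - C (θ - Pi.single j (π / 4)))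
        - ((Real.sqrt 2 - 1) / 2 : ℝ) *
            (C (θ + Pi.single j (π / 2)) - C (θ - Pi.single j (π / 2))) := by
  obtain rfl : C = fun θ => ∑ k, β k * planeWave (γ k) θ := funext hC
  beta_reduce
  have hderiv := HasDerivAt.fun_sum fun k (_ : k ∈ Finset.univ) =>
    (hasDerivAt_planeWave_update (γ k) θ j).const_mul (β k)
  rw [hderiv.deriv, ← Finset.sum_sub_distrib, ← Finset.sum_sub_distrib, Finset.mul_sum,
    ← Finset.sum_sub_distrib]
  refine Finset.sum_congr rfl fun k _ => ?_
  rw [planeWave_shift_rule (γ k) θ j (hγ k j)]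
  ring

/-- **Multivariate parameter shift rule**: if `C(θ) = ∑_{k=1}^{L} β_k exp(i⟨γ_k, θ⟩)` with
frequency vectors `γ_k ∈ {-2,-1,0,1,2}^l`, then each partial derivative of `C` is given by the
four-term parameter shift rule. -/
theorem multivariate_parameter_shift_rule
    (l L : ℕ) (hl : 1 ≤ l)
    (β : Fin L → ℂ) (γ : Fin L → Fin l → ℝ)
    (hγ : ∀ k j, γ k j ∈ ({-2, -1, 0, 1, 2} : Set ℝ))
    (C : (Fin l → ℝ) → ℂ)
    (hC : ∀ θ : Fin l → ℝ, C θ = ∑ k, β k * Complex.exp (Complex.I * ((∑ j, γ k j * θ j : ℝ) : ℂ)))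
    (j : Fin l) (θ : Fin l → ℝ) :
    deriv (fun t : ℝ => C (Function.update θ j t)) (θ j) =
      (C (θ + Pi.single j (π / 4)) - C (θ - Pi.single j (π / 4)))
        - ((Real.sqrt 2 - 1) / 2 : ℝ) *
            (C (θ + Pi.single j (π / 2)) - C (θ - Pi.single j (π / 2))) :=
  multivariate_parameter_shift_rule_general l L β γ hγ C hC j θ
end

section
/- Let P be an n×n complex matrix with P² = I, let A, B, X, Y be n×n complex matrices, and define U(θ) = exp(−i(θ/2)·P). Then there exist complex coefficients β_{-2}, β_{-1}, β_0, β_1, β_2 (independent of θ) such that for all θ ∈ ℝ, tr(A · U(θ) X U(θ)⁻¹ · B · U(θ) Y U(θ)⁻¹) = ∑_{k=-2}^{2} β_k · e^{ikθ}. -/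
/-! Since `P² = 1`, the matrices `E± = (1 ± P)/2` satisfy `Pᵐ = E₊ + (-1)ᵐ E₋`, so summing the
exponential series gives `exp(zP) = e^z E₊ + e^{-z} E₋`. Conjugating by `U(θ)` therefore sends
`X` to `E₊XE₊ + E₋XE₋ + e^{-iθ} E₊XE₋ + e^{iθ} E₋XE₊`, a trigonometric polynomial of degree one with
matrix coefficients. Degrees add under products and are preserved by linear maps such as the
trace, so the quadratic trace functional has degree at most two. -/

open Complex Finset

section Involution

variable {R : Type*} [Ring R] [Algebra ℂ R]

theorem pow_eq_smul_add_smul_of_sq_eq_one {P : R} (hP : P ^ 2 = 1) (m : ℕ) :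
    P ^ m = (2⁻¹ : ℂ) • (1 + P) + ((-1 : ℂ) ^ m) • ((2⁻¹ : ℂ) • (1 - P)) := by
  induction m with
  | zero => rw [pow_zero, pow_zero, one_smul]; module
  | succ m ih =>
    rw [pow_succ, ih, add_mul, smul_mul_assoc, smul_mul_assoc, smul_mul_assoc, add_mul, sub_mul,
      one_mul, ← sq, hP, pow_succ]
    module

variable [TopologicalSpace R] [IsTopologicalRing R] [T2Space R] [ContinuousSMul ℂ R]

theorem NormedSpace.exp_smul_of_sq_eq_one {P : R} (hP : P ^ 2 = 1) (z : ℂ) :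
    NormedSpace.exp (z • P) =
      Complex.exp z • ((2⁻¹ : ℂ) • (1 + P)) + Complex.exp (-z) • ((2⁻¹ : ℂ) • (1 - P)) := by
  have hseries : ∀ w : ℂ, HasSum (fun m : ℕ => ((m.factorial : ℂ)⁻¹ • w ^ m)) (Complex.exp w) := by
    intro w
    rw [Complex.exp_eq_exp_ℂ]
    exact NormedSpace.exp_series_hasSum_exp' w
  have hterm : ∀ m : ℕ, (m.factorial : ℂ)⁻¹ • (z • P) ^ m =
      ((m.factorial : ℂ)⁻¹ • z ^ m) • ((2⁻¹ : ℂ) • (1 + P)) +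
        ((m.factorial : ℂ)⁻¹ • (-z) ^ m) • ((2⁻¹ : ℂ) • (1 - P)) := by
    intro m
    rw [smul_pow, pow_eq_smul_add_smul_of_sq_eq_one hP m, neg_pow]
    module
  rw [NormedSpace.exp_eq_tsum ℂ]
  beta_reduce
  rw [tsum_congr hterm]
  exact (((hseries z).smul_const _).add ((hseries (-z)).smul_const _)).tsum_eq

end Involution

def IsTrigPolyOfDegreeLE {M : Type*} [AddCommMonoid M] [Module ℂ M] (d : ℕ) (f : ℝ → M) : Prop :=
  ∃ β : ℤ → M, ∀ θ : ℝ, f θ = ∑ k ∈ Icc (-d : ℤ) d, Complex.exp (I * k * θ) • β k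

namespace IsTrigPolyOfDegreeLE

variable {M N R : Type*} [AddCommMonoid M] [Module ℂ M] [AddCommMonoid N] [Module ℂ N]
  [Ring R] [Algebra ℂ R]

theorem const (a : M) : IsTrigPolyOfDegreeLE 0 (fun _ => a) :=
  ⟨fun _ => a, fun θ => by simp⟩

theorem of_eq_add_smul_add_smul {f : ℝ → M} (a b c : M)
    (hf : ∀ θ : ℝ, f θ = b + Complex.exp (-(I * θ)) • a + Complex.exp (I * θ) • c) :
    IsTrigPolyOfDegreeLE 1 f := by
  refine ⟨fun k => if k = -1 then a else if k = 0 then b else c, fun θ => ?_⟩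
  have hIcc : Icc (-((1 : ℕ) : ℤ)) ((1 : ℕ) : ℤ) = {-1, 0, 1} := rfl
  rw [hf, hIcc, sum_insert (by decide), sum_insert (by decide), sum_singleton]
  simp only [Int.reduceNeg, Int.cast_neg, Int.cast_one, Int.cast_zero, mul_neg, mul_one, neg_mul,
    mul_zero, zero_mul, Complex.exp_zero, ↓reduceIte, zero_eq_neg, one_ne_zero, one_smul,
    reduceCtorEq]
  abel

theorem map {f : ℝ → M} {d : ℕ} (hf : IsTrigPolyOfDegreeLE d f) (L : M →ₗ[ℂ] N) :
    IsTrigPolyOfDegreeLE d (fun θ => L (f θ)) := by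
  obtain ⟨β, hβ⟩ := hf
  exact ⟨fun k => L (β k), fun θ => by simp only [hβ, map_sum, map_smul]⟩

theorem mul {f g : ℝ → R} {d₁ d₂ : ℕ} (hf : IsTrigPolyOfDegreeLE d₁ f)
    (hg : IsTrigPolyOfDegreeLE d₂ g) : IsTrigPolyOfDegreeLE (d₁ + d₂) (fun θ => f θ * g θ) := by
  obtain ⟨β, hβ⟩ := hf
  obtain ⟨γ, hγ⟩ := hg
  classical
  set s := Icc (-d₁ : ℤ) d₁ ×ˢ Icc (-d₂ : ℤ) d₂
  refine ⟨fun m => ∑ p ∈ s with p.1 + p.2 = m, β p.1 * γ p.2, fun θ => ?_⟩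
  have hmaps : ∀ p ∈ s, p.1 + p.2 ∈ Icc (-(d₁ + d₂ : ℕ) : ℤ) (d₁ + d₂ : ℕ) := by
    intro p hp
    simp only [s, mem_product, mem_Icc] at hp
    simp only [mem_Icc]
    push_cast
    omega
  have hexp : ∀ k l : ℤ, Complex.exp (I * k * θ) * Complex.exp (I * l * θ) =
      Complex.exp (I * ((k + l : ℤ) : ℂ) * θ) := by
    intro k l
    rw [← Complex.exp_add]
    push_cast
    ring_nf
  calc f θ * g θ
      = ∑ p ∈ s, Complex.exp (I * ((p.1 + p.2 : ℤ) : ℂ) * θ) • (β p.1 * γ p.2) := by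
        rw [hβ, hγ, sum_mul_sum, sum_product]
        simp only [smul_mul_smul_comm, hexp]
    _ = _ := by
        rw [← sum_fiberwise_of_maps_to hmaps]
        refine sum_congr rfl fun m _ => ?_
        rw [smul_sum]
        exact sum_congr rfl fun p hp => by rw [(mem_filter.1 hp).2]

end IsTrigPolyOfDegreeLE

theorem smul_add_smul_mul_mul_smul_add_smul {R : Type*} [Ring R] [Algebra ℂ R] (p q x : R)
    (z : ℂ) :
    (Complex.exp (-z) • p + Complex.exp z • q) * x * (Complex.exp z • p + Complex.exp (-z) • q) =
      (p * x * p + q * x * q) + Complex.exp (-(2 * z)) • (p * x * q) +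
        Complex.exp (2 * z) • (q * x * p) := by
  have hinv : Complex.exp (-z) * Complex.exp z = 1 := by
    rw [← Complex.exp_add, neg_add_cancel, Complex.exp_zero]
  have hsq : ∀ u : ℂ, Complex.exp (2 * u) = Complex.exp u * Complex.exp u := fun u => by
    rw [← Complex.exp_add, two_mul]
  rw [← mul_neg, hsq, hsq]
  simp only [add_mul, mul_add, smul_mul_assoc, mul_smul_comm]
  linear_combination (norm := module) hinv • (p * x * p + q * x * q)

theorem isTrigPolyOfDegreeLE_one_pauliConj {m : Type*} [Fintype m] [DecidableEq m]
    {P : Matrix m m ℂ} (hP : P ^ 2 = 1) (X : Matrix m m ℂ) :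
    IsTrigPolyOfDegreeLE 1 (fun θ : ℝ =>
      NormedSpace.exp ((-(I * (θ / 2 : ℂ))) • P) * X *
        (NormedSpace.exp ((-(I * (θ / 2 : ℂ))) • P))⁻¹) := by
  set Ep : Matrix m m ℂ := (2⁻¹ : ℂ) • (1 + P)
  set Em : Matrix m m ℂ := (2⁻¹ : ℂ) • (1 - P)
  refine .of_eq_add_smul_add_smul (Ep * X * Em) (Ep * X * Ep + Em * X * Em) (Em * X * Ep)
    fun θ => ?_
  have hθ : 2 * (I * (θ / 2 : ℂ)) = I * θ := by ring
  rw [← Matrix.exp_neg, ← neg_smul, NormedSpace.exp_smul_of_sq_eq_one hP,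
    NormedSpace.exp_smul_of_sq_eq_one hP, neg_neg, smul_add_smul_mul_mul_smul_add_smul, hθ]

/-- A quadratic trace functional conjugated by the Pauli rotation `U(θ) = exp(-i(θ/2)P)`
(with `P² = 1`) is a trigonometric polynomial in `θ` with frequencies in `{-2,-1,0,1,2}`:
`tr(A U(θ) X U(θ)⁻¹ B U(θ) Y U(θ)⁻¹) = ∑_{k=-2}^{2} β_k e^{ikθ}`. -/
theorem pauli_rotation_quadratic_trace_trig
    (n : ℕ) (P A B X Y : Matrix (Fin n) (Fin n) ℂ) (hP : P ^ 2 = 1)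
    (U : ℝ → Matrix (Fin n) (Fin n) ℂ)
    (hU : ∀ θ : ℝ, U θ = NormedSpace.exp ((-(Complex.I * (θ / 2 : ℂ))) • P)) :
    ∃ β : ℤ → ℂ, ∀ θ : ℝ,
      Matrix.trace (A * (U θ * X * (U θ)⁻¹) * B * (U θ * Y * (U θ)⁻¹)) =
        ∑ k ∈ Finset.Icc (-2 : ℤ) 2, β k * Complex.exp (Complex.I * (k : ℂ) * (θ : ℂ)) := by
  have hconj : ∀ Z, IsTrigPolyOfDegreeLE 1 (fun θ => U θ * Z * (U θ)⁻¹) := by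
    intro Z
    simp only [hU]
    exact isTrigPolyOfDegreeLE_one_pauliConj hP Z
  open IsTrigPolyOfDegreeLE in
  obtain ⟨β, hβ⟩ : IsTrigPolyOfDegreeLE 2 fun θ =>
      Matrix.trace (A * (U θ * X * (U θ)⁻¹) * B * (U θ * Y * (U θ)⁻¹)) :=
    ((((const A).mul (hconj X)).mul (const B)).mul (hconj Y)).map (Matrix.traceLinearMap _ ℂ ℂ)
  exact ⟨β, fun θ => by simp only [hβ θ, Nat.cast_ofNat, smul_eq_mul, mul_comm]⟩
end

section
/- Let C : ℝ → ℂ be a finite trigonometric sum C(θ) = ∑_{k=1}^{L} β_k · e^{i·γ_k·θ}, where β_k ∈ ℂ and γ_1, …, γ_L are pairwise distinct real numbers. Then there exist a finite set S ⊂ ℝ of shifts and coefficients c_Δ ∈ ℂ for Δ ∈ S (both independent of θ) such that the derivative satisfies C'(θ) = ∑_{Δ ∈ S} c_Δ · C(θ + Δ) for all θ ∈ ℝ. -/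
/-!
For small `t > 0` the angles `γ k * t` lie in one period, so the nodes `x k = exp (i γ k t)`
are distinct and the Vandermonde system `∑ j, s j * x k ^ j = i γ k` has a solution `s`.
Since `C (θ + j t) = ∑ k, β k e^{i γ k θ} x k ^ j`, the combination `∑ j, s j * C (θ + j t)`
multiplies the `k`-th term of `C` by `i γ k`, which is exactly what differentiation does.
-/

open Complex

open Filter Topology in
theorem exists_pos_injective_cexp_I_mul {ι : Type*} [Finite ι] {γ : ι → ℝ}
    (hγ : Function.Injective γ) :
    ∃ t : ℝ, 0 < t ∧ Function.Injective fun k => cexp (I * γ k * t) := by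
  have hsmall : ∀ᶠ t in 𝓝[>] (0 : ℝ), ∀ k, γ k * t ∈ Set.Ioc (-Real.pi) Real.pi := by
    refine nhdsWithin_le_nhds (eventually_all.2 fun k => ?_)
    have hcont : Tendsto (fun t : ℝ => γ k * t) (𝓝 0) (𝓝 0) := by
      simpa using (continuous_const_mul (γ k)).tendsto 0
    exact hcont (Ioc_mem_nhds (by linarith [Real.pi_pos]) Real.pi_pos)
  obtain ⟨t, hsmall, ht⟩ := (hsmall.and self_mem_nhdsWithin).exists
  refine ⟨t, ht, fun p q hpq => hγ ?_⟩
  have hcircle : Circle.exp (γ p * t) = Circle.exp (γ q * t) := by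
    ext
    simpa only [Circle.coe_exp, ofReal_mul, mul_comm, mul_left_comm] using hpq
  exact mul_right_cancel₀ ht.ne'
    (Circle.exp_injOn_Ioc (by linarith) (hsmall p) (hsmall q) hcircle)

theorem exists_sum_mul_pow_eq_of_injective {K : Type*} [Field K] {n : ℕ} {x : Fin n → K}
    (hx : Function.Injective x) (w : Fin n → K) :
    ∃ s : Fin n → K, ∀ k, ∑ j, s j * x k ^ (j : ℕ) = w k := by
  have hunit : IsUnit (Matrix.vandermonde x) :=
    (Matrix.isUnit_iff_isUnit_det _).2 (Matrix.det_vandermonde_ne_zero_iff.2 hx).isUnit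
  obtain ⟨s, hs⟩ := Matrix.mulVec_surjective_iff_isUnit.2 hunit w
  refine ⟨s, fun k => ?_⟩
  rw [← hs]
  simp only [Matrix.mulVec, dotProduct, Matrix.vandermonde_apply, mul_comm]

theorem exists_sum_image_eq_sum_comp {ι α R : Type*} [Fintype ι] [DecidableEq α]
    [NonUnitalNonAssocSemiring R] {f : ι → α} (hf : Function.Injective f) (s : ι → R) :
    ∃ c : α → R, ∀ g : α → R,
      ∑ a ∈ Finset.univ.image f, c a * g a = ∑ i, s i * g (f i) := by
  refine ⟨Function.extend f s 0, fun g => ?_⟩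
  rw [Finset.sum_image fun i _ j _ h => hf h]
  simp only [hf.extend_apply]

section trigSum

variable {ι : Type*} [Fintype ι] (β : ι → ℂ) (γ : ι → ℝ)

noncomputable def trigSum (θ : ℝ) : ℂ :=
  ∑ k, β k * cexp (I * γ k * θ)

theorem hasDerivAt_trigSum (θ : ℝ) :
    HasDerivAt (trigSum β γ) (trigSum (fun k => I * γ k * β k) γ θ) θ := by
  unfold trigSum
  refine HasDerivAt.fun_sum fun k _ => ?_
  have hlin : HasDerivAt (fun θ : ℝ => I * γ k * θ) (I * γ k) θ := by
    simpa using ((hasDerivAt_id θ).ofReal_comp).const_mul (I * (γ k : ℂ))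
  exact (hlin.cexp.const_mul (β k)).congr_deriv (by ring)

theorem sum_mul_trigSum_add_nat_mul {n : ℕ} (s : Fin n → ℂ) (t θ : ℝ) :
    ∑ j, s j * trigSum β γ (θ + j * t) =
      trigSum (fun k => (∑ j, s j * cexp (I * γ k * t) ^ (j : ℕ)) * β k) γ θ := by
  have hshift : ∀ (k : ι) (j : Fin n),
      cexp (I * γ k * ↑(θ + j * t)) =
        cexp (I * γ k * θ) * cexp (I * γ k * t) ^ (j : ℕ) := by
    intro k j
    rw [← exp_nat_mul, ← exp_add]
    congr 1
    push_cast
    ring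
  simp only [trigSum, Finset.mul_sum, Finset.sum_mul, hshift]
  rw [Finset.sum_comm]
  exact Finset.sum_congr rfl fun k _ => Finset.sum_congr rfl fun j _ => by ring

end trigSum

/-- **Existence of a parameter shift rule** (sufficiency): a finite trigonometric sum
`C(θ) = ∑_{k=1}^{L} β_k e^{iγ_k θ}` with pairwise distinct real frequencies admits a parameter
shift rule: its derivative is a fixed finite linear combination of shifted evaluations. -/
theorem trig_sum_admits_parameter_shift_rule
    (L : ℕ) (β : Fin L → ℂ) (γ : Fin L → ℝ)
    (hγ : ∀ p q : Fin L, p ≠ q → γ p ≠ γ q)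
    (C : ℝ → ℂ)
    (hC : ∀ θ : ℝ, C θ = ∑ k, β k * Complex.exp (Complex.I * (γ k : ℂ) * (θ : ℂ))) :
    ∃ (S : Finset ℝ) (c : ℝ → ℂ), ∀ θ : ℝ,
      deriv C θ = ∑ Δ ∈ S, c Δ * C (θ + Δ) := by
  classical
  obtain ⟨t, ht, hnodes⟩ :=
    exists_pos_injective_cexp_I_mul fun p q h => by_contra fun hpq => hγ p q hpq h
  obtain ⟨s, hs⟩ := exists_sum_mul_pow_eq_of_injective hnodes fun k => I * γ k
  have hshifts : Function.Injective fun j : Fin L => (j : ℝ) * t :=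
    fun i j h => Fin.ext (by exact_mod_cast mul_right_cancel₀ ht.ne' h)
  obtain ⟨c, hc⟩ := exists_sum_image_eq_sum_comp hshifts s
  have hCeq : C = trigSum β γ := funext hC
  refine ⟨Finset.univ.image fun j : Fin L => (j : ℝ) * t, c, fun θ => ?_⟩
  rw [hc fun Δ => C (θ + Δ), hCeq, (hasDerivAt_trigSum β γ θ).deriv,
    sum_mul_trigSum_add_nat_mul]
  simp only [hs]
end

section
/- Let S ⊂ ℝ be a finite set and c : S → ℂ. Then the function f : ℝ → ℂ defined by f(ω) = i·ω − ∑_{Δ ∈ S} c_Δ · e^{−i·ω·Δ} has only finitely many zeros on ℝ; that is, the set {ω ∈ ℝ : f(ω) = 0} is finite. -/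
/-!
The map `ω ↦ iω - ∑_{Δ ∈ S} c_Δ e^{-iωΔ}` is the restriction to `ℝ` of an entire function, so it
is real analytic on the connected line and its zeros cannot accumulate unless it vanishes
identically. Since `|e^{-iωΔ}| = 1`, every real zero satisfies `|ω| ≤ ∑ ‖c_Δ‖`; this confines the
zeros to a compact interval and also rules out `f ≡ 0`. Finitely many zeros then remain.
-/

open Complex Set

theorem AnalyticOnNhd.finite_setOf_eq_zero_of_subset_isCompact {𝕜 E : Type*}
    [NontriviallyNormedField 𝕜] [PreconnectedSpace 𝕜] [NormedAddCommGroup E] [NormedSpace 𝕜 E]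
    {f : 𝕜 → E} (hf : AnalyticOnNhd 𝕜 f univ) {K : Set 𝕜} (hK : IsCompact K)
    (hzeros : {x | f x = 0} ⊆ K) (hne : ∃ x, f x ≠ 0) : {x | f x = 0}.Finite := by
  obtain ⟨x, hx⟩ := hne
  have hcodiscrete : {x | f x ≠ 0} ∈ Filter.codiscreteWithin K :=
    Filter.codiscreteWithin_mono (subset_univ K) <|
      (hf.eqOn_zero_or_eventually_ne_zero_of_preconnected isPreconnected_univ).resolve_left
        fun h ↦ hx (h (mem_univ x))
  exact (hK.finite_sdiff_of_mem_codiscreteWithin hcodiscrete).subset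
    fun y hy ↦ ⟨hzeros hy, not_not.mpr hy⟩

theorem Differentiable.analyticOnNhd_comp_ofReal {E : Type*} [NormedAddCommGroup E]
    [NormedSpace ℂ E] [CompleteSpace E] {g : ℂ → E} (hg : Differentiable ℂ g) :
    AnalyticOnNhd ℝ (fun x : ℝ ↦ g x) univ := fun x _ ↦
  (hg.analyticAt (x : ℂ)).restrictScalars.comp (ofRealCLM.analyticAt x)

noncomputable def expSum (S : Finset ℝ) (c : ℝ → ℂ) (z : ℂ) : ℂ :=
  ∑ Δ ∈ S, c Δ * exp (-(I * z * Δ))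

theorem differentiable_expSum (S : Finset ℝ) (c : ℝ → ℂ) : Differentiable ℂ (expSum S c) := by
  unfold expSum
  fun_prop

theorem norm_expSum_ofReal_le (S : Finset ℝ) (c : ℝ → ℂ) (ω : ℝ) :
    ‖expSum S c ω‖ ≤ ∑ Δ ∈ S, ‖c Δ‖ := by
  refine (norm_sum_le _ _).trans (Finset.sum_le_sum fun Δ _ ↦ ?_)
  have hexp : -(I * ω * Δ) = ((-(ω * Δ) : ℝ) : ℂ) * I := by push_cast; ring
  rw [norm_mul, hexp, norm_exp_ofReal_mul_I, mul_one]

theorem abs_le_sum_norm_of_I_mul_sub_expSum_eq_zero {S : Finset ℝ} {c : ℝ → ℂ} {ω : ℝ}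
    (h : I * ω - expSum S c ω = 0) : |ω| ≤ ∑ Δ ∈ S, ‖c Δ‖ :=
  calc |ω| = ‖I * ω‖ := by simp
    _ = ‖expSum S c ω‖ := by rw [sub_eq_zero.mp h]
    _ ≤ ∑ Δ ∈ S, ‖c Δ‖ := norm_expSum_ofReal_le S c ω

/-- The function `f(ω) = iω - ∑_{Δ ∈ S} c_Δ e^{-iωΔ}` has only finitely many real zeros. -/
theorem shift_rule_characteristic_function_finite_zeros
    (S : Finset ℝ) (c : ℝ → ℂ) :
    {ω : ℝ | Complex.I * (ω : ℂ)
        - ∑ Δ ∈ S, c Δ * Complex.exp (-(Complex.I * (ω : ℂ) * (Δ : ℂ))) = 0}.Finite := by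
  change {ω : ℝ | I * ω - expSum S c ω = 0}.Finite
  set M := ∑ Δ ∈ S, ‖c Δ‖
  have hbound {ω : ℝ} (h : I * ω - expSum S c ω = 0) : |ω| ≤ M :=
    abs_le_sum_norm_of_I_mul_sub_expSum_eq_zero h
  have hM : 0 ≤ M := Finset.sum_nonneg fun _ _ ↦ norm_nonneg _
  have hanalytic : AnalyticOnNhd ℝ (fun ω : ℝ ↦ I * ω - expSum S c ω) univ :=
    ((differentiable_id.const_mul I).sub (differentiable_expSum S c)).analyticOnNhd_comp_ofReal
  refine hanalytic.finite_setOf_eq_zero_of_subset_isCompact (isCompact_Icc (a := -M) (b := M))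
    (fun ω h ↦ abs_le.mp (hbound h)) ⟨M + 1, fun h ↦ ?_⟩
  have := hbound h
  rw [abs_of_pos (by linarith)] at this
  linarith
end

section
/- Let μ be a finite complex measure on ℝ and let C : ℝ → ℂ be given by C(θ) = ∫_ℝ e^{i·ω·θ} dμ(ω). Suppose C is differentiable and satisfies a parameter shift rule: there is a finite set S ⊂ ℝ and coefficients c_Δ ∈ ℂ (Δ ∈ S) such that C'(θ) = ∑_{Δ ∈ S} c_Δ · C(θ + Δ) for all θ ∈ ℝ. Then C is a finite trigonometric sum: there exist L ∈ ℕ, coefficients β_1, …, β_L ∈ ℂ, and real frequencies γ_1, …, γ_L ∈ ℝ such that C(θ) = ∑_{k=1}^{L} β_k · e^{i·γ_k·θ} for all θ ∈ ℝ. -/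
/-!
Write `h(ω) = iω - ∑_Δ c_Δ e^{iωΔ}` for the symbol of the operator `d/dθ - ∑_Δ c_Δ τ_Δ` that the
shift rule annihilates. Integrating the shift rule over `[θ, θ + s]` (which avoids differentiating
under the integral sign: `f μ` need not have a first moment) and applying Fubini gives
`∫ e^{iωθ} K_s(ω) h(ω) f(ω) dμ(ω) = 0` for all `θ`, where `K_s(ω) = ∫_0^s e^{iωt} dt`.
Uniqueness of the Fourier transform of finite measures then forces `K_s h f = 0` `μ`-a.e., and since
`K_1` and `K_√2` have no common zero, `h f = 0` `μ`-a.e. As `h` is real analytic, not identically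
zero, and its real zeros satisfy `|ω| ≤ ∑_Δ ‖c_Δ‖`, it has only finitely many zeros, so `f μ` is
carried by a finite set of frequencies and `C` is a finite trigonometric sum.
-/

open Complex MeasureTheory Filter Set ComplexConjugate

theorem norm_cexp_I_mul_ofReal_mul_ofReal (x t : ℝ) : ‖cexp (I * x * t)‖ = 1 := by
  simp [Complex.norm_exp]

theorem AnalyticOnNhd.finite_setOf_eq_zero {𝕜 E : Type*} [NontriviallyNormedField 𝕜]
    [PreconnectedSpace 𝕜] [NormedAddCommGroup E] [NormedSpace 𝕜 E] {f : 𝕜 → E}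
    (hf : AnalyticOnNhd 𝕜 f univ) (hne : f ≠ 0) {K : Set 𝕜} (hK : IsCompact K)
    (hzero : {x | f x = 0} ⊆ K) : {x | f x = 0}.Finite := by
  rcases hf.eqOn_zero_or_eventually_ne_zero_of_preconnected isPreconnected_univ with h | h
  · exact absurd (funext fun x ↦ h (mem_univ x)) hne
  · have hcodiscrete := codiscreteWithin_mono (subset_univ K) h
    exact (hK.finite_sdiff_of_mem_codiscreteWithin hcodiscrete).subset
      fun x hx ↦ ⟨hzero hx, fun hx' ↦ hx' hx⟩

theorem integrable_cexp_mul {μ : Measure ℝ} {f : ℝ → ℂ} (hf : Integrable f μ) (θ : ℝ) :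
    Integrable (fun ω : ℝ ↦ cexp (I * ω * θ) * f ω) μ :=
  hf.bdd_mul (by fun_prop : Continuous fun ω : ℝ ↦ cexp (I * ω * θ)).aestronglyMeasurable
    (ae_of_all _ fun ω ↦ (norm_cexp_I_mul_ofReal_mul_ofReal ω θ).le)

theorem ae_eq_zero_of_forall_integral_cexp_mul_ofReal_eq_zero {μ : Measure ℝ} [IsFiniteMeasure μ]
    {g : ℝ → ℝ} (hg : Integrable g μ) (h : ∀ t : ℝ, ∫ x, cexp (I * x * t) * g x ∂μ = 0) :
    g =ᵐ[μ] 0 := by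
  have charFun_withDensity (φ : ℝ → ℝ) (hφ : Integrable φ μ) (t : ℝ) :
      charFun (μ.withDensity fun x ↦ ENNReal.ofReal (φ x)) t
        = ∫ x, cexp (I * x * t) * (max (φ x) 0 : ℝ) ∂μ := by
    rw [charFun_apply_real, integral_withDensity_eq_integral_toReal_smul₀
      hφ.1.aemeasurable.ennreal_ofReal (ae_of_all _ fun _ ↦ ENNReal.ofReal_lt_top)]
    simp_rw [ENNReal.toReal_ofReal', Complex.real_smul]
    congr 1 with x
    ring_nf
  have integrable_posPart (φ : ℝ → ℝ) (hφ : Integrable φ μ) :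
      Integrable (fun x ↦ ((max (φ x) 0 : ℝ) : ℂ)) μ :=
    hφ.pos_part.ofReal
  have := isFiniteMeasure_withDensity_ofReal hg.2
  have := isFiniteMeasure_withDensity_ofReal hg.fun_neg.2
  have hpos_eq_neg : μ.withDensity (fun x ↦ ENNReal.ofReal (g x))
      = μ.withDensity (fun x ↦ ENNReal.ofReal (-g x)) := by
    refine Measure.ext_of_charFun (funext fun t ↦ ?_)
    rw [charFun_withDensity g hg, charFun_withDensity (fun x ↦ -g x) hg.fun_neg, ← sub_eq_zero,
      ← integral_sub (integrable_cexp_mul (integrable_posPart g hg) t)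
        (integrable_cexp_mul (integrable_posPart _ hg.fun_neg) t), ← h t]
    simp_rw [← mul_sub, ← ofReal_sub, max_zero_sub_max_neg_zero_eq_self]
  rw [withDensity_eq_iff hg.1.aemeasurable.ennreal_ofReal hg.fun_neg.1.aemeasurable.ennreal_ofReal
    hg.lintegral_lt_top.ne] at hpos_eq_neg
  filter_upwards [hpos_eq_neg] with x hx
  have hmax : max (g x) 0 = max (-g x) 0 := by
    simpa only [ENNReal.toReal_ofReal'] using congrArg ENNReal.toReal hx
  rw [Pi.zero_apply, ← max_zero_sub_max_neg_zero_eq_self (g x), hmax, sub_self]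

theorem ae_eq_zero_of_forall_integral_cexp_mul_eq_zero {μ : Measure ℝ} [IsFiniteMeasure μ]
    {g : ℝ → ℂ} (hg : Integrable g μ) (h : ∀ t : ℝ, ∫ x, cexp (I * x * t) * g x ∂μ = 0) :
    g =ᵐ[μ] 0 := by
  have hconj (t : ℝ) : ∫ x, cexp (I * x * t) * conj (g x) ∂μ = 0 := by
    have := congrArg conj (h (-t))
    rw [← integral_conj, map_zero] at this
    simpa [← exp_conj] using this
  have hg_conj : Integrable (fun x ↦ conj (g x)) μ :=
    conjCLE.toContinuousLinearMap.integrable_comp hg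
  have hre : (fun x ↦ (g x).re) =ᵐ[μ] 0 := by
    refine ae_eq_zero_of_forall_integral_cexp_mul_ofReal_eq_zero hg.re fun t ↦ ?_
    simp_rw [re_eq_add_conj, mul_div_assoc', mul_add]
    rw [integral_div, integral_add (integrable_cexp_mul hg t) (integrable_cexp_mul hg_conj t), h,
      hconj, add_zero, zero_div]
  have him : (fun x ↦ (g x).im) =ᵐ[μ] 0 := by
    refine ae_eq_zero_of_forall_integral_cexp_mul_ofReal_eq_zero hg.im fun t ↦ ?_
    simp_rw [im_eq_sub_conj, mul_div_assoc', mul_sub]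
    rw [integral_div, integral_sub (integrable_cexp_mul hg t) (integrable_cexp_mul hg_conj t), h,
      hconj, sub_zero, zero_div]
  filter_upwards [hre, him] with x hxre hxim
  exact Complex.ext hxre hxim

theorem sub_eq_sum_mul_intervalIntegral_of_deriv_eq {C : ℝ → ℂ} (hdiff : Differentiable ℝ C)
    {S : Finset ℝ} {c : ℝ → ℂ} (hshift : ∀ θ, deriv C θ = ∑ Δ ∈ S, c Δ * C (θ + Δ)) (a b : ℝ) :
    C b - C a = ∑ Δ ∈ S, c Δ * ∫ t in a..b, C (t + Δ) := by
  have hcont (Δ : ℝ) : Continuous fun t ↦ c Δ * C (t + Δ) :=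
    continuous_const.mul (hdiff.continuous.comp (continuous_add_const Δ))
  rw [← intervalIntegral.integral_deriv_eq_sub (fun x _ ↦ hdiff x), funext hshift,
    intervalIntegral.integral_finsetSum fun Δ _ ↦ (hcont Δ).intervalIntegrable a b]
  · simp_rw [intervalIntegral.integral_const_mul]
  · rw [funext hshift]
    exact (continuous_finsetSum S fun Δ _ ↦ hcont Δ).intervalIntegrable a b

noncomputable def expKernel (s ω : ℝ) : ℂ := ∫ t in (0 : ℝ)..s, cexp (I * ω * t)

theorem expKernel_zero_right (s : ℝ) : expKernel s 0 = s := by simp [expKernel]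

theorem I_mul_mul_expKernel (s ω : ℝ) : I * ω * expKernel s ω = cexp (I * ω * s) - 1 := by
  rcases eq_or_ne ω 0 with rfl | hω
  · simp
  · have hIω : I * ω ≠ 0 := mul_ne_zero I_ne_zero (ofReal_ne_zero.mpr hω)
    rw [expKernel, integral_exp_mul_complex hIω, mul_div_cancel₀ _ hIω]
    simp

theorem norm_expKernel_le (s ω : ℝ) : ‖expKernel s ω‖ ≤ |s| := by
  simpa [expKernel] using intervalIntegral.norm_integral_le_of_norm_le_const
    (a := 0) (b := s) (C := 1) fun t _ ↦ (norm_cexp_I_mul_ofReal_mul_ofReal ω t).le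

theorem continuous_expKernel (s : ℝ) : Continuous (expKernel s) :=
  intervalIntegral.continuous_parametric_intervalIntegral_of_continuous' (by fun_prop) 0 s

theorem intervalIntegral_cexp_eq_cexp_mul_expKernel (a s ω : ℝ) :
    ∫ t in a..a + s, cexp (I * ω * t) = cexp (I * ω * a) * expKernel s ω := by
  have hexp_add (t : ℝ) : cexp (I * ω * a) * cexp (I * ω * t) = cexp (I * ω * ↑(a + t)) := by
    rw [← exp_add]; push_cast; ring_nf
  rw [expKernel, ← intervalIntegral.integral_const_mul]
  simp_rw [hexp_add]
  rw [intervalIntegral.integral_comp_add_left (fun t : ℝ ↦ cexp (I * ω * t)), add_zero]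

theorem expKernel_one_ne_zero_or_sqrt_two_ne_zero (ω : ℝ) :
    expKernel 1 ω ≠ 0 ∨ expKernel (√2) ω ≠ 0 := by
  rcases eq_or_ne ω 0 with rfl | hω
  · simp [expKernel_zero_right]
  by_contra! hzero
  have hperiod (s : ℝ) (hs : expKernel s ω = 0) : ∃ n : ℤ, ω * s = n * (2 * Real.pi) := by
    have := I_mul_mul_expKernel s ω
    rw [hs, mul_zero, eq_comm, sub_eq_zero, exp_eq_one_iff] at this
    obtain ⟨n, hn⟩ := this
    refine ⟨n, ofReal_injective ?_⟩
    apply mul_left_cancel₀ I_ne_zero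
    push_cast
    linear_combination hn
  obtain ⟨m, hm⟩ := hperiod 1 hzero.1
  obtain ⟨n, hn⟩ := hperiod (√2) hzero.2
  have hm0 : (m : ℝ) ≠ 0 := by
    rintro hm0
    rw [hm0, mul_one, zero_mul] at hm
    exact hω hm
  apply irrational_sqrt_two
  refine ⟨n / m, ?_⟩
  rw [mul_one] at hm
  rw [hm] at hn
  have hsqrt : (m : ℝ) * √2 = n :=
    mul_right_cancel₀ (by positivity : 2 * Real.pi ≠ 0) (by linear_combination hn)
  push_cast
  rw [div_eq_iff hm0]
  linarith

noncomputable def shiftRuleSymbol (S : Finset ℝ) (c : ℝ → ℂ) (ω : ℝ) : ℂ :=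
  I * ω - ∑ Δ ∈ S, c Δ * cexp (I * ω * Δ)

section shiftRuleSymbol

variable (S : Finset ℝ) (c : ℝ → ℂ)

theorem continuous_shiftRuleSymbol : Continuous (shiftRuleSymbol S c) := by
  unfold shiftRuleSymbol; fun_prop

theorem analyticOnNhd_shiftRuleSymbol : AnalyticOnNhd ℝ (shiftRuleSymbol S c) univ := by
  have hdiff : Differentiable ℂ fun z : ℂ ↦ I * z - ∑ Δ ∈ S, c Δ * cexp (I * z * Δ) := by
    fun_prop
  exact fun ω _ ↦ (hdiff.analyticAt (ω : ℂ)).restrictScalars.comp (ofRealCLM.analyticAt ω)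

theorem norm_sum_mul_cexp_le (ω : ℝ) : ‖∑ Δ ∈ S, c Δ * cexp (I * ω * Δ)‖ ≤ ∑ Δ ∈ S, ‖c Δ‖ :=
  (norm_sum_le _ _).trans_eq <| Finset.sum_congr rfl fun Δ _ ↦ by
    rw [norm_mul, norm_cexp_I_mul_ofReal_mul_ofReal, mul_one]

theorem abs_le_of_shiftRuleSymbol_eq_zero {ω : ℝ} (hω : shiftRuleSymbol S c ω = 0) :
    |ω| ≤ ∑ Δ ∈ S, ‖c Δ‖ := by
  rw [shiftRuleSymbol, sub_eq_zero] at hω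
  have := norm_sum_mul_cexp_le S c ω
  rwa [← hω, norm_mul, norm_I, one_mul, norm_real, Real.norm_eq_abs] at this

theorem finite_setOf_shiftRuleSymbol_eq_zero : {ω | shiftRuleSymbol S c ω = 0}.Finite := by
  set M := ∑ Δ ∈ S, ‖c Δ‖
  refine (analyticOnNhd_shiftRuleSymbol S c).finite_setOf_eq_zero (fun h ↦ ?_)
    (isCompact_Icc (a := -M) (b := M))
    fun ω hω ↦ abs_le.mp (abs_le_of_shiftRuleSymbol_eq_zero S c hω)
  have hM : 0 ≤ M := Finset.sum_nonneg fun _ _ ↦ norm_nonneg _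
  have := abs_le_of_shiftRuleSymbol_eq_zero S c (congrFun h (M + 1))
  rw [abs_of_nonneg (by linarith)] at this
  linarith

theorem norm_expKernel_mul_shiftRuleSymbol_le (s ω : ℝ) :
    ‖expKernel s ω * shiftRuleSymbol S c ω‖ ≤ 2 + |s| * ∑ Δ ∈ S, ‖c Δ‖ := by
  have hsplit : expKernel s ω * shiftRuleSymbol S c ω
      = (cexp (I * ω * s) - 1) - expKernel s ω * ∑ Δ ∈ S, c Δ * cexp (I * ω * Δ) := by
    rw [shiftRuleSymbol, ← I_mul_mul_expKernel]
    ring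
  rw [hsplit]
  refine (norm_sub_le _ _).trans (add_le_add ((norm_sub_le _ _).trans ?_) ?_)
  · rw [norm_cexp_I_mul_ofReal_mul_ofReal, norm_one]
    norm_num
  · rw [norm_mul]
    exact mul_le_mul (norm_expKernel_le s ω) (norm_sum_mul_cexp_le S c ω) (norm_nonneg _)
      (abs_nonneg s)

end shiftRuleSymbol

section FourierIntegral

variable {μ : Measure ℝ} {f : ℝ → ℂ}

theorem integral_cexp_mul_eq_sum_of_ae_eq_zero (hf : Integrable f μ) {T : Finset ℝ}
    (hT : ∀ᵐ ω ∂μ, ω ∉ T → f ω = 0) (θ : ℝ) :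
    ∫ ω, cexp (I * ω * θ) * f ω ∂μ = ∑ ω ∈ T, μ.real {ω} * f ω * cexp (I * ω * θ) := by
  rw [← setIntegral_eq_integral_of_ae_compl_eq_zero (hT.mono fun ω hω hωT ↦ by simp [hω hωT]),
    setIntegral_finset T (integrable_cexp_mul hf θ).integrableOn]
  refine Finset.sum_congr rfl fun ω _ ↦ ?_
  rw [real_smul]
  ring

theorem integrable_cexp_mul_expKernel_mul (hf : Integrable f μ) (θ s : ℝ) :
    Integrable (fun ω : ℝ ↦ cexp (I * ω * θ) * expKernel s ω * f ω) μ :=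
  hf.bdd_mul ((by fun_prop : Continuous fun ω : ℝ ↦ cexp (I * ω * θ)).mul
    (continuous_expKernel s)).aestronglyMeasurable (ae_of_all _ fun ω ↦ by
      rw [norm_mul, norm_cexp_I_mul_ofReal_mul_ofReal, one_mul]
      exact norm_expKernel_le s ω)

variable [IsFiniteMeasure μ]

theorem intervalIntegral_integral_cexp_mul (hf : Integrable f μ) (a b : ℝ) :
    ∫ t in a..b, ∫ ω, cexp (I * ω * t) * f ω ∂μ
      = ∫ ω, (∫ t in a..b, cexp (I * ω * t)) * f ω ∂μ := by
  have : IsFiniteMeasure (volume.restrict (uIoc a b)) :=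
    isFiniteMeasure_restrict.mpr (by simp [Real.volume_uIoc])
  have hprod : Integrable (fun p : ℝ × ℝ ↦ cexp (I * p.2 * p.1) * (1 * f p.2))
      ((volume.restrict (uIoc a b)).prod μ) :=
    ((integrable_const (1 : ℂ)).mul_prod hf).bdd_mul (c := 1)
      (by fun_prop : Continuous fun p : ℝ × ℝ ↦ cexp (I * p.2 * p.1)).aestronglyMeasurable
      (ae_of_all _ fun p ↦ (norm_cexp_I_mul_ofReal_mul_ofReal p.2 p.1).le)
  simp_rw [one_mul] at hprod
  rw [intervalIntegral_integral_swap hprod]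
  simp_rw [intervalIntegral.integral_mul_const]

theorem integral_cexp_mul_expKernel_mul_shiftRuleSymbol_mul_eq_zero (hf : Integrable f μ)
    {C : ℝ → ℂ} (hC : ∀ θ, C θ = ∫ ω, cexp (I * ω * θ) * f ω ∂μ) (hdiff : Differentiable ℝ C)
    {S : Finset ℝ} {c : ℝ → ℂ} (hshift : ∀ θ, deriv C θ = ∑ Δ ∈ S, c Δ * C (θ + Δ)) (s θ : ℝ) :
    ∫ ω, cexp (I * ω * θ) * (expKernel s ω * shiftRuleSymbol S c ω * f ω) ∂μ = 0 := by
  have hpointwise (ω : ℝ) :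
      cexp (I * ω * θ) * (expKernel s ω * shiftRuleSymbol S c ω * f ω)
        = (cexp (I * ω * ↑(θ + s)) * f ω - cexp (I * ω * θ) * f ω)
          - ∑ Δ ∈ S, c Δ * (cexp (I * ω * ↑(θ + Δ)) * expKernel s ω * f ω) := by
    have hsum : ∑ Δ ∈ S, c Δ * (cexp (I * ω * ↑(θ + Δ)) * expKernel s ω * f ω)
        = cexp (I * ω * θ) * expKernel s ω * f ω * ∑ Δ ∈ S, c Δ * cexp (I * ω * Δ) := by
      rw [Finset.mul_sum]
      refine Finset.sum_congr rfl fun Δ _ ↦ ?_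
      rw [ofReal_add, mul_add, exp_add]
      ring
    rw [hsum, shiftRuleSymbol, ofReal_add, mul_add, exp_add]
    linear_combination (cexp (I * ω * θ) * f ω) * I_mul_mul_expKernel s ω
  have hshifted (Δ : ℝ) : ∫ t in θ..θ + s, C (t + Δ)
      = ∫ ω, cexp (I * ω * ↑(θ + Δ)) * expKernel s ω * f ω ∂μ := by
    rw [intervalIntegral.integral_comp_add_right C Δ, add_right_comm, funext hC,
      intervalIntegral_integral_cexp_mul hf]
    simp_rw [intervalIntegral_cexp_eq_cexp_mul_expKernel]
  simp_rw [hpointwise]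
  rw [integral_sub ((integrable_cexp_mul hf _).sub' (integrable_cexp_mul hf _))
      (integrable_finsetSum _ fun Δ _ ↦
        (integrable_cexp_mul_expKernel_mul hf _ s).const_mul (c Δ)),
    integral_sub (integrable_cexp_mul hf _) (integrable_cexp_mul hf _), ← hC, ← hC,
    integral_finsetSum _ fun Δ _ ↦ (integrable_cexp_mul_expKernel_mul hf _ s).const_mul (c Δ),
    sub_eq_sum_mul_intervalIntegral_of_deriv_eq hdiff hshift]
  simp_rw [integral_const_mul, hshifted, sub_self]

theorem ae_shiftRuleSymbol_mul_eq_zero (hf : Integrable f μ)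
    {C : ℝ → ℂ} (hC : ∀ θ, C θ = ∫ ω, cexp (I * ω * θ) * f ω ∂μ) (hdiff : Differentiable ℝ C)
    {S : Finset ℝ} {c : ℝ → ℂ} (hshift : ∀ θ, deriv C θ = ∑ Δ ∈ S, c Δ * C (θ + Δ)) :
    ∀ᵐ ω ∂μ, shiftRuleSymbol S c ω * f ω = 0 := by
  have hkernel (s : ℝ) : ∀ᵐ ω ∂μ, expKernel s ω * shiftRuleSymbol S c ω * f ω = 0 :=
    ae_eq_zero_of_forall_integral_cexp_mul_eq_zero
      (hf.bdd_mul
        ((continuous_expKernel s).mul (continuous_shiftRuleSymbol S c)).aestronglyMeasurable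
        (ae_of_all _ (norm_expKernel_mul_shiftRuleSymbol_le S c s)))
      (integral_cexp_mul_expKernel_mul_shiftRuleSymbol_mul_eq_zero hf hC hdiff hshift s)
  filter_upwards [hkernel 1, hkernel √2] with ω h₁ h₂
  rw [mul_assoc] at h₁ h₂
  rcases expKernel_one_ne_zero_or_sqrt_two_ne_zero ω with h | h
  · exact (mul_eq_zero.mp h₁).resolve_left h
  · exact (mul_eq_zero.mp h₂).resolve_left h

end FourierIntegral

/-- **Necessity direction of the parameter-shift-rule characterization**: if
`C(θ) = ∫ e^{iωθ} dμ(ω)` is the inverse Fourier transform of a finite complex measure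
(represented by a complex density `f` integrable with respect to a finite positive measure `μ`),
`C` is differentiable, and `C` satisfies a parameter shift rule
`C'(θ) = ∑_{Δ ∈ S} c_Δ C(θ + Δ)`, then `C` is a finite trigonometric sum. -/
theorem parameter_shift_rule_implies_trig_sum
    (μ : Measure ℝ) [IsFiniteMeasure μ] (f : ℝ → ℂ) (hf : Integrable f μ)
    (C : ℝ → ℂ)
    (hC : ∀ θ : ℝ, C θ = ∫ ω : ℝ, Complex.exp (Complex.I * (ω : ℂ) * (θ : ℂ)) * f ω ∂μ)
    (hdiff : Differentiable ℝ C)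
    (S : Finset ℝ) (c : ℝ → ℂ)
    (hshift : ∀ θ : ℝ, deriv C θ = ∑ Δ ∈ S, c Δ * C (θ + Δ)) :
    ∃ (L : ℕ) (β : Fin L → ℂ) (γ : Fin L → ℝ), ∀ θ : ℝ,
      C θ = ∑ k, β k * Complex.exp (Complex.I * (γ k : ℂ) * (θ : ℂ)) := by
  set T := (finite_setOf_shiftRuleSymbol_eq_zero S c).toFinset
  have hT : ∀ᵐ ω ∂μ, ω ∉ T → f ω = 0 :=
    (ae_shiftRuleSymbol_mul_eq_zero hf hC hdiff hshift).mono fun ω hω hωT ↦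
      (mul_eq_zero.mp hω).resolve_left (by simpa [T] using hωT)
  refine ⟨T.card, fun k ↦ μ.real {(T.equivFin.symm k : ℝ)} * f (T.equivFin.symm k),
    fun k ↦ T.equivFin.symm k, fun θ ↦ ?_⟩
  rw [hC, integral_cexp_mul_eq_sum_of_ae_eq_zero hf hT, ← T.sum_coe_sort,
    ← T.equivFin.symm.sum_comp]
end

section
/- Let A and E be n×n complex matrices with A² = A, tr(A) = 1, A·E = 0 and E·A = 0, let ε ∈ ℂ, and set σ = (1−ε)·A + ε·E. Then for every n×n complex matrix O and every integer m ≥ 1: tr(O·σ^m) − tr(O·A)·tr(σ^m) = ε^m · ( tr(O·E^m) − tr(O·A)·tr(E^m) ). -/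
/-- In the virtual distillation error model `σ = (1-ε)A + εE` with `A² = A`, `tr(A) = 1` and
`AE = EA = 0`, the distillation-corrected expectation deviates from the ideal value only at
order `ε^m`: `tr(Oσ^m) - tr(OA)tr(σ^m) = ε^m (tr(OE^m) - tr(OA)tr(E^m))`. -/
theorem virtual_distillation_deviation
    (n : ℕ) (A E : Matrix (Fin n) (Fin n) ℂ)
    (hA : A ^ 2 = A) (htrA : Matrix.trace A = 1) (hAE : A * E = 0) (hEA : E * A = 0)
    (ε : ℂ) (σ : Matrix (Fin n) (Fin n) ℂ) (hσ : σ = (1 - ε) • A + ε • E) :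
    ∀ (O : Matrix (Fin n) (Fin n) ℂ) (m : ℕ), 1 ≤ m →
      Matrix.trace (O * σ ^ m) - Matrix.trace (O * A) * Matrix.trace (σ ^ m) =
        ε ^ m * (Matrix.trace (O * E ^ m) - Matrix.trace (O * A) * Matrix.trace (E ^ m)) := by
  have hAA : A * A = A := by rw [← pow_two, hA]
  have key : ∀ m : ℕ, 1 ≤ m → σ ^ m = (1 - ε) ^ m • A + ε ^ m • E ^ m := by
    intro m hm
    induction m with
    | zero => omega
    | succ k ih =>
      rcases Nat.eq_or_lt_of_le hm with h | h
      · simp [← h, hσ]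
      · have hk : 1 ≤ k := by omega
        have hEkA : E ^ k * A = 0 := by
          obtain ⟨j, rfl⟩ := Nat.exists_eq_add_of_le hk
          rw [add_comm, pow_add, pow_one, mul_assoc, hEA, mul_zero]
        rw [pow_succ, ih hk, hσ]
        simp only [Matrix.add_mul, Matrix.mul_add, Matrix.smul_mul, Matrix.mul_smul,
          hAA, hAE, hEkA, smul_zero, zero_add, add_zero, smul_smul, ← pow_succ]
        rw [← pow_succ', ← pow_succ']
  intro O m hm
  rw [key m hm]
  simp only [Matrix.mul_add, Matrix.mul_smul, Matrix.trace_add, Matrix.trace_smul, smul_eq_mul,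
    htrA, mul_one]
  ring
end

section
/- Let A and E be n×n complex matrices with A² = A, tr(A) = 1, A·E = 0 and E·A = 0, let ε ∈ ℂ, and set σ = (1−ε)·A + ε·E. Fix an integer m ≥ 1 and an n×n complex matrix O, and suppose (1−ε)^m + ε^m·tr(E^m) ≠ 0. Then tr(O·σ^m) / tr(σ^m) = ( (1−ε)^m·tr(O·A) + ε^m·tr(O·E^m) ) / ( (1−ε)^m + ε^m·tr(E^m) ). -/
/-- **Exact closed form of the error-mitigated expectation value** (Appendix C): in the virtual
distillation error model `σ = (1-ε)A + εE` with `A² = A`, `tr(A) = 1` and `AE = EA = 0`,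
provided `(1-ε)^m + ε^m tr(E^m) ≠ 0`,
`tr(Oσ^m)/tr(σ^m) = ((1-ε)^m tr(OA) + ε^m tr(OE^m)) / ((1-ε)^m + ε^m tr(E^m))`. -/
theorem virtual_distillation_closed_form
    (n : ℕ) (A E : Matrix (Fin n) (Fin n) ℂ)
    (hA : A ^ 2 = A) (htrA : Matrix.trace A = 1) (hAE : A * E = 0) (hEA : E * A = 0)
    (ε : ℂ) (σ : Matrix (Fin n) (Fin n) ℂ) (hσ : σ = (1 - ε) • A + ε • E)
    (m : ℕ) (hm : 1 ≤ m) (O : Matrix (Fin n) (Fin n) ℂ)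
    (hden : (1 - ε) ^ m + ε ^ m * Matrix.trace (E ^ m) ≠ 0) :
    Matrix.trace (O * σ ^ m) / Matrix.trace (σ ^ m) =
      ((1 - ε) ^ m * Matrix.trace (O * A) + ε ^ m * Matrix.trace (O * E ^ m)) /
        ((1 - ε) ^ m + ε ^ m * Matrix.trace (E ^ m)) := by
  have hEmA : ∀ k : ℕ, E ^ (k + 1) * A = 0 := by
    intro k
    rw [pow_succ, mul_assoc, hEA, mul_zero]
  have key : ∀ k : ℕ, σ ^ (k + 1) = (1 - ε) ^ (k + 1) • A + ε ^ (k + 1) • E ^ (k + 1) := by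
    intro k
    induction k with
    | zero => simp [hσ]
    | succ k ih =>
        have : σ ^ (k + 2) = σ ^ (k + 1) * σ := by rw [pow_succ]
        rw [this, ih, hσ]
        have hAA : A * A = A := by rw [← pow_two, hA]
        simp only [Matrix.add_mul, Matrix.mul_add, Matrix.smul_mul, Matrix.mul_smul,
          hAA, hAE, hEmA k, smul_zero, zero_add, add_zero, smul_smul]
        rw [← pow_succ', ← pow_succ', ← pow_succ]
  obtain ⟨k, rfl⟩ : ∃ k, m = k + 1 := ⟨m - 1, (Nat.succ_pred_eq_of_pos hm).symm⟩
  rw [key k]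
  have hAm : Matrix.trace ((1 - ε) ^ (k + 1) • A + ε ^ (k + 1) • E ^ (k + 1)) =
      (1 - ε) ^ (k + 1) + ε ^ (k + 1) * Matrix.trace (E ^ (k + 1)) := by
    simp [Matrix.trace_add, Matrix.trace_smul, htrA, smul_eq_mul]
  rw [hAm]
  congr 1
  rw [Matrix.mul_add, Matrix.trace_add, Matrix.mul_smul, Matrix.mul_smul,
    Matrix.trace_smul, Matrix.trace_smul, smul_eq_mul, smul_eq_mul]
end

section
/- Let (Ω, P) be a probability space and let X, Y : Ω → M_n(ℂ) be independent, integrable random n×n complex matrices with E[X] = E[Y] = ρ. Let S be the swap matrix on ℂ^n ⊗ ℂ^n with entries S_{(i,j),(k,l)} = 1 if i = l and j = k, and 0 otherwise. Then for all fixed n×n complex matrices O₁, O₂: E[ tr( (X ⊗ Y) · S · (O₁ ⊗ O₂) ) ] = tr( O₁ · ρ · O₂ · ρ ). -/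
open Complex MeasureTheory ProbabilityTheory Matrix
open scoped Kronecker

/-- The Borel-type measurable space structure on `n × n` complex matrices, obtained from the
product σ-algebra on the entries. -/
noncomputable instance matrixMeasurableSpace (n : ℕ) :
    MeasurableSpace (Matrix (Fin n) (Fin n) ℂ) :=
  inferInstanceAs (MeasurableSpace (Fin n → Fin n → ℂ))

/-- The swap matrix on `ℂ^n ⊗ ℂ^n`, with entries `S_{(i,j),(k,l)} = 1` if `i = l` and `j = k`,
and `0` otherwise. -/
def swapMatrix (n : ℕ) : Matrix (Fin n × Fin n) (Fin n × Fin n) ℂ :=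
  fun p q => if p.1 = q.2 ∧ p.2 = q.1 then 1 else 0

/-!
The estimator is the linear functional `M ↦ tr(M S (O₁ ⊗ O₂))` evaluated at `M = X ⊗ Y`, so its
expectation is that functional at `E[X ⊗ Y]`. Each entry of `X ⊗ Y` is a product `X_{ik} Y_{jl}` of
independent variables, hence `E[X ⊗ Y] = ρ ⊗ ρ`, and the swap trick
`tr((A ⊗ B) S (C ⊗ D)) = tr(C A D B)` finishes.
-/

theorem trace_swapMatrix_mul_kronecker (n : ℕ) (A B : Matrix (Fin n) (Fin n) ℂ) :
    trace (swapMatrix n * (A ⊗ₖ B)) = trace (A * B) := by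
  rw [trace_mul_comm A B]
  simp only [trace, diag, mul_apply, swapMatrix, kroneckerMap_apply, ite_mul, one_mul, zero_mul,
    Fintype.sum_prod_type]
  simp [ite_and, Finset.sum_ite_eq, mul_comm]

theorem trace_kronecker_mul_swapMatrix_mul_kronecker (n : ℕ) (A B C D : Matrix (Fin n) (Fin n) ℂ) :
    trace ((A ⊗ₖ B) * swapMatrix n * (C ⊗ₖ D)) = trace (C * A * D * B) := by
  rw [trace_mul_comm, ← Matrix.mul_assoc, ← mul_kronecker_mul, trace_mul_comm,
    trace_swapMatrix_mul_kronecker, Matrix.mul_assoc, Matrix.mul_assoc, ← Matrix.mul_assoc]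

section Integral

variable {Ω : Type*} [MeasurableSpace Ω] {μ : Measure Ω}

theorem integral_trace_mul_const {𝕜 m l : Type*} [RCLike 𝕜] [Fintype m] [Fintype l]
    {M : Ω → Matrix m l 𝕜} (hM : ∀ i j, Integrable (fun ω => M ω i j) μ) (K : Matrix l m 𝕜) :
    ∫ ω, trace (M ω * K) ∂μ = trace (Matrix.of (fun i j => ∫ ω, M ω i j ∂μ) * K) := by
  simp only [trace, diag, mul_apply, of_apply]
  rw [integral_finsetSum _ fun i _ => integrable_finsetSum _ fun j _ => (hM i j).mul_const _]
  refine Finset.sum_congr rfl fun i _ => ?_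
  rw [integral_finsetSum _ fun j _ => (hM i j).mul_const _]
  exact Finset.sum_congr rfl fun j _ => integral_mul_const _ _

variable {n : ℕ} {X Y : Ω → Matrix (Fin n) (Fin n) ℂ}

theorem ProbabilityTheory.IndepFun.indepFun_entry (hXY : IndepFun X Y μ) (i j k l : Fin n) :
    IndepFun (fun ω => X ω i j) (fun ω => Y ω k l) μ :=
  hXY.comp (measurable_pi_apply j |>.comp (measurable_pi_apply i))
    (measurable_pi_apply l |>.comp (measurable_pi_apply k))

theorem ProbabilityTheory.IndepFun.integrable_kronecker_entry (hXY : IndepFun X Y μ)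
    (hX : ∀ i j, Integrable (fun ω => X ω i j) μ) (hY : ∀ i j, Integrable (fun ω => Y ω i j) μ)
    (p q : Fin n × Fin n) :
    Integrable (fun ω => (X ω ⊗ₖ Y ω) p q) μ :=
  (hXY.indepFun_entry p.1 q.1 p.2 q.2).integrable_mul (hX p.1 q.1) (hY p.2 q.2)

theorem ProbabilityTheory.IndepFun.integral_kronecker_entry (hXY : IndepFun X Y μ)
    (hX : ∀ i j, Integrable (fun ω => X ω i j) μ) (hY : ∀ i j, Integrable (fun ω => Y ω i j) μ)
    (p q : Fin n × Fin n) :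
    ∫ ω, (X ω ⊗ₖ Y ω) p q ∂μ = (∫ ω, X ω p.1 q.1 ∂μ) * ∫ ω, Y ω p.2 q.2 ∂μ :=
  (hXY.indepFun_entry p.1 q.1 p.2 q.2).integral_fun_mul_eq_mul_integral
    (hX p.1 q.1).aestronglyMeasurable (hY p.2 q.2).aestronglyMeasurable

end Integral

theorem swap_shadow_estimator_unbiased_general
    (n : ℕ) {Ω : Type*} [MeasurableSpace Ω] (P : Measure Ω)
    (X Y : Ω → Matrix (Fin n) (Fin n) ℂ)
    (hXint : ∀ i j, Integrable (fun ω => X ω i j) P)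
    (hYint : ∀ i j, Integrable (fun ω => Y ω i j) P)
    (hindep : IndepFun X Y P)
    (ρ : Matrix (Fin n) (Fin n) ℂ)
    (hX : ∀ i j, (∫ ω, X ω i j ∂P) = ρ i j)
    (hY : ∀ i j, (∫ ω, Y ω i j ∂P) = ρ i j)
    (O₁ O₂ : Matrix (Fin n) (Fin n) ℂ) :
    (∫ ω, Matrix.trace ((X ω ⊗ₖ Y ω) * swapMatrix n * (O₁ ⊗ₖ O₂)) ∂P) =
      Matrix.trace (O₁ * ρ * O₂ * ρ) := by
  have hmean : Matrix.of (fun p q => ∫ ω, (X ω ⊗ₖ Y ω) p q ∂P) = ρ ⊗ₖ ρ := by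
    ext p q
    rw [of_apply, hindep.integral_kronecker_entry hXint hYint, hX, hY, kroneckerMap_apply]
  calc (∫ ω, trace ((X ω ⊗ₖ Y ω) * swapMatrix n * (O₁ ⊗ₖ O₂)) ∂P)
      = trace ((ρ ⊗ₖ ρ) * (swapMatrix n * (O₁ ⊗ₖ O₂))) := by
        simp_rw [Matrix.mul_assoc]
        rw [integral_trace_mul_const (hindep.integrable_kronecker_entry hXint hYint), hmean]
    _ = trace (O₁ * ρ * O₂ * ρ) := by
        rw [← Matrix.mul_assoc, trace_kronecker_mul_swapMatrix_mul_kronecker]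

/-- **Unbiasedness of the shadow-distillation swap estimator**: if `X`, `Y` are independent
random matrices with `E[X] = E[Y] = ρ`, then
`E[tr((X ⊗ Y) S (O₁ ⊗ O₂))] = tr(O₁ ρ O₂ ρ)`. -/
theorem swap_shadow_estimator_unbiased
    (n : ℕ) {Ω : Type*} [MeasurableSpace Ω] (P : Measure Ω) [IsProbabilityMeasure P]
    (X Y : Ω → Matrix (Fin n) (Fin n) ℂ)
    (hXint : ∀ i j, Integrable (fun ω => X ω i j) P)
    (hYint : ∀ i j, Integrable (fun ω => Y ω i j) P)
    (hindep : IndepFun X Y P)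
    (ρ : Matrix (Fin n) (Fin n) ℂ)
    (hX : ∀ i j, (∫ ω, X ω i j ∂P) = ρ i j)
    (hY : ∀ i j, (∫ ω, Y ω i j ∂P) = ρ i j)
    (O₁ O₂ : Matrix (Fin n) (Fin n) ℂ) :
    (∫ ω, Matrix.trace ((X ω ⊗ₖ Y ω) * swapMatrix n * (O₁ ⊗ₖ O₂)) ∂P) =
      Matrix.trace (O₁ * ρ * O₂ * ρ) :=
  swap_shadow_estimator_unbiased_general n P X Y hXint hYint hindep ρ hX hY O₁ O₂
end
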